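/- Let 0 < α < 1/2, T > 0, and M₁, M₂ > 0 with M₁/(1+z) ≤ E_{α,1}(−z) ≤ M₂/(1+z) for all z ≥ 0, and let K > 0 satisfy 2K²M₂²T² (1 + M₂²/((1−2α)M₁²)) < 1. Suppose v : [0,T] → ℓ²(J₂) is bounded and measurable and that for every t ∈ [0,T] and every j ∈ J₂: v(t)_j = K ∫₀^t E_{α,1}(−λ_j(t−s)^α) v(s)_j ds − K ∫₀^T ( E_{α,1}(−λ_j t^α) E_{α,1}(−λ_j(T−s)^α) / E_{α,1}(−λ_j T^α) ) v(s)_j ds. Then v(t) = 0 for every t ∈ [0,T]. -/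

import Mathlib

/-!
Fix a coordinate `j` and write `E z = E_{α,1}(-z)`. The two-sided bound on `E` bounds the
Volterra kernel by `M₂` and the boundary kernel by `(M₂² / M₁) T^α (T - s)^(-α)`, because
`1 + λ T^α ≤ (1 + λ (T - s)^α) (T / (T - s))^α`. Integrating, a uniform bound `B` on all
coordinates of `v` over `[0, T]` improves to `ρ B` with `ρ = |K| (M₂ T + M₂² T / (M₁ (1 - α)))`,
and the smallness assumption on `K` gives `ρ < 1` via `(1 - α)² ≥ 1 - 2α`. Iterating, `v = 0`.
-/

open Real MeasureTheory intervalIntegral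

/-- The Mittag-Leffler function `E_{a,b}(z) = ∑_{i=0}^∞ z^i / Γ(a i + b)`. -/
noncomputable def mittagLeffler (a b z : ℝ) : ℝ :=
  ∑' i : ℕ, z ^ i / Real.Gamma (a * i + b)

/-- Pairs of positive integers. -/
abbrev J2 := ℕ+ × ℕ+

/-- `λ_j = j₁² + j₂²`. -/
def lam2 (j : J2) : ℝ := ((j.1 : ℕ) : ℝ) ^ 2 + ((j.2 : ℕ) : ℝ) ^ 2

/-- The Hilbert space `ℓ²(J₂)` of square-summable real families. -/
noncomputable abbrev H2 := lp (fun _ : J2 => ℝ) 2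

open Set Filter Topology

section ReciprocalBounds

variable {E : ℝ → ℝ} {M₁ M₂ : ℝ}

theorem pos_of_forall_div_one_add_le (hM₁ : 0 < M₁)
    (hE : ∀ z, 0 ≤ z → M₁ / (1 + z) ≤ E z) {z : ℝ} (hz : 0 ≤ z) : 0 < E z :=
  (div_pos hM₁ (by linarith)).trans_le (hE z hz)

theorem le_of_forall_le_div_one_add (hM₂ : 0 ≤ M₂)
    (hE : ∀ z, 0 ≤ z → E z ≤ M₂ / (1 + z)) {z : ℝ} (hz : 0 ≤ z) : E z ≤ M₂ :=
  (hE z hz).trans (div_le_self hM₂ (by linarith))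

theorem mul_div_le_of_two_sided_bound (hM₁ : 0 < M₁) (hM₂ : 0 ≤ M₂)
    (hE : ∀ z, 0 ≤ z → M₁ / (1 + z) ≤ E z ∧ E z ≤ M₂ / (1 + z))
    {x y z : ℝ} (hx : 0 ≤ x) (hy : 0 ≤ y) (hz : 0 ≤ z) :
    E x * E y / E z ≤ M₂ ^ 2 / M₁ * ((1 + z) / (1 + y)) := calc
  E x * E y / E z ≤ M₂ * (M₂ / (1 + y)) / (M₁ / (1 + z)) := by
    have hEy := pos_of_forall_div_one_add_le hM₁ (fun z hz => (hE z hz).1) hy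
    gcongr
    · exact le_of_forall_le_div_one_add hM₂ (fun z hz => (hE z hz).2) hx
    · exact (hE y hy).2
    · exact (hE z hz).1
  _ = M₂ ^ 2 / M₁ * ((1 + z) / (1 + y)) := by
    field_simp

end ReciprocalBounds

theorem one_add_mul_rpow_le {α l u T : ℝ} (hα : 0 ≤ α) (hu : 0 < u)
    (huT : u ≤ T) : 1 + l * T ^ α ≤ (1 + l * u ^ α) * (T ^ α * u ^ (-α)) := by
  have hcancel : u ^ α * u ^ (-α) = 1 := by rw [← rpow_add hu]; simp
  have hone : 1 ≤ T ^ α * u ^ (-α) := by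
    rw [rpow_neg hu.le, ← div_eq_mul_inv, one_le_div (rpow_pos_of_pos hu α)]
    exact rpow_le_rpow hu.le huT hα
  calc 1 + l * T ^ α ≤ T ^ α * u ^ (-α) + l * T ^ α * (u ^ α * u ^ (-α)) := by
        rw [hcancel]; linarith
    _ = (1 + l * u ^ α) * (T ^ α * u ^ (-α)) := by ring

theorem integral_sub_rpow_neg {α T : ℝ} (hα : α < 1) :
    ∫ s in (0 : ℝ)..T, (T - s) ^ (-α) = T ^ (1 - α) / (1 - α) := by
  rw [intervalIntegral.integral_comp_sub_left (fun x : ℝ => x ^ (-α)), sub_self, sub_zero,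
    integral_rpow (Or.inl (by linarith)), zero_rpow (by linarith)]
  ring_nf

theorem lam2_nonneg (j : J2) : 0 ≤ lam2 j := by
  unfold lam2; positivity

theorem eq_zero_of_forall_abs_le_mul {ι : Type*} {f : ι → ℝ} {ρ C : ℝ} (hρ0 : 0 ≤ ρ)
    (hρ1 : ρ < 1) (hC : ∀ i, |f i| ≤ C)
    (hf : ∀ B, (∀ i, |f i| ≤ B) → ∀ i, |f i| ≤ ρ * B) (i : ι) : f i = 0 := by
  have hpow : ∀ n : ℕ, ∀ i, |f i| ≤ ρ ^ n * C := by
    intro n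
    induction n with
    | zero => simpa using hC
    | succ n ih => simpa [pow_succ', mul_assoc] using hf _ ih
  have hlim : Tendsto (fun n : ℕ => ρ ^ n * C) atTop (𝓝 0) := by
    simpa using (tendsto_pow_atTop_nhds_zero_of_lt_one hρ0 hρ1).mul_const C
  exact abs_nonpos_iff.mp (ge_of_tendsto' hlim fun n => hpow n i)

section CoordinateEstimate

variable {E : ℝ → ℝ} {α T M₁ M₂ l B : ℝ} {w : ℝ → ℝ}

theorem boundary_kernel_le (hα : 0 ≤ α) (hM₁ : 0 < M₁) (hM₂ : 0 ≤ M₂)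
    (hE : ∀ z, 0 ≤ z → M₁ / (1 + z) ≤ E z ∧ E z ≤ M₂ / (1 + z)) (hl : 0 ≤ l)
    {t u : ℝ} (ht : 0 ≤ t) (hu : 0 < u) (huT : u ≤ T) :
    E (l * t ^ α) * E (l * u ^ α) / E (l * T ^ α) ≤ M₂ ^ 2 / M₁ * (T ^ α * u ^ (-α)) := by
  have hT : 0 < T := hu.trans_le huT
  refine (mul_div_le_of_two_sided_bound hM₁ hM₂ hE (by positivity) (by positivity)
    (by positivity)).trans ?_
  gcongr
  rw [div_le_iff₀ (by positivity)]
  exact (one_add_mul_rpow_le hα hu huT).trans_eq (mul_comm _ _)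

theorem abs_integral_volterra_le (hM₁ : 0 < M₁) (hM₂ : 0 ≤ M₂)
    (hE : ∀ z, 0 ≤ z → M₁ / (1 + z) ≤ E z ∧ E z ≤ M₂ / (1 + z)) (hl : 0 ≤ l)
    (hB : ∀ s ∈ Icc 0 T, |w s| ≤ B) {t : ℝ} (ht : t ∈ Icc 0 T) :
    |∫ s in (0 : ℝ)..t, E (l * (t - s) ^ α) * w s| ≤ M₂ * T * B := by
  have hbound : ∀ s ∈ uIoc 0 t, ‖E (l * (t - s) ^ α) * w s‖ ≤ M₂ * B := by
    intro s hs
    rw [uIoc_of_le ht.1] at hs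
    have hz : 0 ≤ l * (t - s) ^ α := mul_nonneg hl (rpow_nonneg (by linarith [hs.2]) _)
    rw [norm_mul,
      norm_of_nonneg (pos_of_forall_div_one_add_le hM₁ (fun z hz => (hE z hz).1) hz).le]
    exact mul_le_mul (le_of_forall_le_div_one_add hM₂ (fun z hz => (hE z hz).2) hz)
      (hB s ⟨hs.1.le, hs.2.trans ht.2⟩) (norm_nonneg _) hM₂
  have hB0 : 0 ≤ B := (abs_nonneg _).trans (hB t ht)
  calc |∫ s in (0 : ℝ)..t, E (l * (t - s) ^ α) * w s| ≤ M₂ * B * |t - 0| :=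
        intervalIntegral.norm_integral_le_of_norm_le_const hbound
    _ ≤ M₂ * B * T := by rw [sub_zero, abs_of_nonneg ht.1]; gcongr; exact ht.2
    _ = M₂ * T * B := by ring

theorem abs_integral_boundary_le (hα0 : 0 < α) (hα1 : α < 1) (hT : 0 < T) (hM₁ : 0 < M₁)
    (hM₂ : 0 ≤ M₂) (hE : ∀ z, 0 ≤ z → M₁ / (1 + z) ≤ E z ∧ E z ≤ M₂ / (1 + z)) (hl : 0 ≤ l)
    (hB : ∀ s ∈ Icc 0 T, |w s| ≤ B) {t : ℝ} (ht : 0 ≤ t) :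
    |∫ s in (0 : ℝ)..T, E (l * t ^ α) * E (l * (T - s) ^ α) / E (l * T ^ α) * w s|
      ≤ M₂ ^ 2 * T / (M₁ * (1 - α)) * B := by
  have hB0 : 0 ≤ B := (abs_nonneg _).trans (hB 0 ⟨le_rfl, hT.le⟩)
  have hα1' : 0 < 1 - α := by linarith
  have hE0 : ∀ z, 0 ≤ z → 0 < E z := fun z hz =>
    pos_of_forall_div_one_add_le hM₁ (fun z hz => (hE z hz).1) hz
  -- the weight `(T - s) ^ (-α)` is singular at `s = T`, so the bound only holds a.e.
  have hbound : ∀ᵐ s ∂volume.restrict (uIoc 0 T),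
      ‖E (l * t ^ α) * E (l * (T - s) ^ α) / E (l * T ^ α) * w s‖
        ≤ M₂ ^ 2 / M₁ * B * T ^ α * (T - s) ^ (-α) := by
    filter_upwards [ae_restrict_of_ae (Measure.ae_ne volume T),
      ae_restrict_mem measurableSet_uIoc] with s hsT hs
    rw [uIoc_of_le hT.le] at hs
    have hu : 0 < T - s := sub_pos.mpr (lt_of_le_of_ne hs.2 hsT)
    rw [norm_mul, norm_of_nonneg (div_nonneg (mul_nonneg (hE0 _ (by positivity)).le
      (hE0 _ (by positivity)).le) (hE0 _ (by positivity)).le)]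
    calc E (l * t ^ α) * E (l * (T - s) ^ α) / E (l * T ^ α) * ‖w s‖
        ≤ M₂ ^ 2 / M₁ * (T ^ α * (T - s) ^ (-α)) * B := by
          gcongr
          · exact boundary_kernel_le hα0.le hM₁ hM₂ hE hl ht hu (by linarith [hs.1])
          · exact hB s ⟨hs.1.le, hs.2⟩
      _ = M₂ ^ 2 / M₁ * B * T ^ α * (T - s) ^ (-α) := by ring
  have hweight : IntervalIntegrable (fun s => (T - s) ^ (-α)) volume 0 T := by
    simpa using
      ((intervalIntegrable_rpow' (a := 0) (b := T) (by linarith : -1 < -α)).comp_sub_left T).symm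
  have hvalue : ∫ s in (0 : ℝ)..T, M₂ ^ 2 / M₁ * B * T ^ α * (T - s) ^ (-α)
      = M₂ ^ 2 * T / (M₁ * (1 - α)) * B := by
    rw [intervalIntegral.integral_const_mul, integral_sub_rpow_neg hα1, mul_assoc,
      mul_div_assoc', ← rpow_add hT, add_sub_cancel, rpow_one]
    field_simp
  refine (intervalIntegral.norm_integral_le_abs_of_norm_le hbound
    (hweight.const_mul _)).trans_eq ?_
  rw [hvalue, abs_of_nonneg (by positivity)]

theorem abs_le_of_eq_volterra_sub_boundary (hα0 : 0 < α) (hα1 : α < 1) (hT : 0 < T)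
    (hM₁ : 0 < M₁) (hM₂ : 0 ≤ M₂)
    (hE : ∀ z, 0 ≤ z → M₁ / (1 + z) ≤ E z ∧ E z ≤ M₂ / (1 + z)) (hl : 0 ≤ l)
    (hB : ∀ s ∈ Icc 0 T, |w s| ≤ B) {K t : ℝ} (ht : t ∈ Icc 0 T)
    (hw : w t = K * (∫ s in (0 : ℝ)..t, E (l * (t - s) ^ α) * w s)
      - K * ∫ s in (0 : ℝ)..T, E (l * t ^ α) * E (l * (T - s) ^ α) / E (l * T ^ α) * w s) :
    |w t| ≤ |K| * (M₂ * T + M₂ ^ 2 * T / (M₁ * (1 - α))) * B := by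
  rw [hw]
  refine (abs_sub _ _).trans ?_
  rw [abs_mul, abs_mul]
  calc |K| * |∫ s in (0 : ℝ)..t, E (l * (t - s) ^ α) * w s|
        + |K| * |∫ s in (0 : ℝ)..T, E (l * t ^ α) * E (l * (T - s) ^ α) / E (l * T ^ α) * w s|
      ≤ |K| * (M₂ * T * B) + |K| * (M₂ ^ 2 * T / (M₁ * (1 - α)) * B) := by
        gcongr
        · exact abs_integral_volterra_le hM₁ hM₂ hE hl hB ht
        · exact abs_integral_boundary_le hα0 hα1 hT hM₁ hM₂ hE hl hB ht.1
    _ = |K| * (M₂ * T + M₂ ^ 2 * T / (M₁ * (1 - α))) * B := by ring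

end CoordinateEstimate

theorem contraction_factor_lt_one {α T M₁ M₂ K : ℝ} (hα : α < 1 / 2) (hM₁ : 0 < M₁)
    (hK : 2 * K ^ 2 * M₂ ^ 2 * T ^ 2 * (1 + M₂ ^ 2 / ((1 - 2 * α) * M₁ ^ 2)) < 1) :
    |K| * (M₂ * T + M₂ ^ 2 * T / (M₁ * (1 - α))) < 1 := by
  set q := M₂ / (M₁ * (1 - α))
  have hρ : |K| * (M₂ * T + M₂ ^ 2 * T / (M₁ * (1 - α))) = |K| * M₂ * T * (1 + q) := by
    ring
  have hq : q ^ 2 ≤ M₂ ^ 2 / ((1 - 2 * α) * M₁ ^ 2) := by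
    have h2α : 0 < 1 - 2 * α := by linarith
    rw [div_pow, mul_pow]
    refine div_le_div_of_nonneg_left (sq_nonneg _) (by positivity) ?_
    nlinarith [sq_nonneg α, sq_nonneg M₁]
  -- `(a + b)² ≤ 2 (a² + b²)`
  have hsq : (|K| * M₂ * T * (1 + q)) ^ 2 < 1 := calc
    (|K| * M₂ * T * (1 + q)) ^ 2 ≤ 2 * K ^ 2 * M₂ ^ 2 * T ^ 2 * (1 + q ^ 2) := by
      rw [mul_pow, ← sq_abs K]
      nlinarith [sq_nonneg (1 - q), sq_nonneg (|K| * M₂ * T)]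
    _ ≤ 2 * K ^ 2 * M₂ ^ 2 * T ^ 2 * (1 + M₂ ^ 2 / ((1 - 2 * α) * M₁ ^ 2)) := by gcongr
    _ < 1 := hK
  rw [hρ]
  exact lt_of_abs_lt (sq_lt_one_iff_abs_lt_one _ |>.mp hsq)

theorem stmt_19_general (α T M₁ M₂ K : ℝ)
    (hα0 : 0 < α) (hα1 : α < 1 / 2) (hT : 0 < T) (hM₁ : 0 < M₁) (hM₂ : 0 < M₂)
    (hML : ∀ z : ℝ, 0 ≤ z →
      M₁ / (1 + z) ≤ mittagLeffler α 1 (-z) ∧ mittagLeffler α 1 (-z) ≤ M₂ / (1 + z))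
    (hK : 2 * K ^ 2 * M₂ ^ 2 * T ^ 2 * (1 + M₂ ^ 2 / ((1 - 2 * α) * M₁ ^ 2)) < 1)
    (v : ℝ → H2)
    (hvbdd : ∃ C : ℝ, ∀ t ∈ Set.Icc (0 : ℝ) T, ‖v t‖ ≤ C)
    (hveq : ∀ t ∈ Set.Icc (0 : ℝ) T, ∀ j : J2,
      (v t : ∀ _ : J2, ℝ) j =
        K * (∫ s in (0 : ℝ)..t,
            mittagLeffler α 1 (-(lam2 j * (t - s) ^ α)) * (v s : ∀ _ : J2, ℝ) j)
        - K * ∫ s in (0 : ℝ)..T,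
            (mittagLeffler α 1 (-(lam2 j * t ^ α)) *
              mittagLeffler α 1 (-(lam2 j * (T - s) ^ α)) /
              mittagLeffler α 1 (-(lam2 j * T ^ α))) * (v s : ∀ _ : J2, ℝ) j) :
    ∀ t ∈ Set.Icc (0 : ℝ) T, v t = 0 := by
  obtain ⟨C, hC⟩ := hvbdd
  have hα1' : 0 < 1 - α := by linarith
  have hcoord : ∀ p : Icc 0 T × J2, (v p.1 : ∀ _ : J2, ℝ) p.2 = 0 :=
    eq_zero_of_forall_abs_le_mul (by positivity) (contraction_factor_lt_one hα1 hM₁ hK)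
      (fun p => (lp.norm_apply_le_norm two_ne_zero _ _).trans (hC _ p.1.2))
      fun B hB p => abs_le_of_eq_volterra_sub_boundary (E := fun z => mittagLeffler α 1 (-z))
        (w := fun s => (v s : ∀ _ : J2, ℝ) p.2) hα0 (by linarith) hT hM₁ hM₂.le hML
        (lam2_nonneg p.2) (fun s hs => hB (⟨s, hs⟩, p.2)) p.1.2 (hveq _ p.1.2 p.2)
  intro t ht
  ext j
  exact hcoord (⟨t, ht⟩, j)

theorem stmt_19 (α T M₁ M₂ K : ℝ)
    (hα0 : 0 < α) (hα1 : α < 1 / 2) (hT : 0 < T) (hM₁ : 0 < M₁) (hM₂ : 0 < M₂)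
    (hML : ∀ z : ℝ, 0 ≤ z →
      M₁ / (1 + z) ≤ mittagLeffler α 1 (-z) ∧ mittagLeffler α 1 (-z) ≤ M₂ / (1 + z))
    (hK0 : 0 < K)
    (hK : 2 * K ^ 2 * M₂ ^ 2 * T ^ 2 * (1 + M₂ ^ 2 / ((1 - 2 * α) * M₁ ^ 2)) < 1)
    (v : ℝ → H2) (hvmeas : StronglyMeasurable v)
    (hvbdd : ∃ C : ℝ, ∀ t ∈ Set.Icc (0 : ℝ) T, ‖v t‖ ≤ C)
    (hveq : ∀ t ∈ Set.Icc (0 : ℝ) T, ∀ j : J2,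
      (v t : ∀ _ : J2, ℝ) j =
        K * (∫ s in (0 : ℝ)..t,
            mittagLeffler α 1 (-(lam2 j * (t - s) ^ α)) * (v s : ∀ _ : J2, ℝ) j)
        - K * ∫ s in (0 : ℝ)..T,
            (mittagLeffler α 1 (-(lam2 j * t ^ α)) *
              mittagLeffler α 1 (-(lam2 j * (T - s) ^ α)) /
              mittagLeffler α 1 (-(lam2 j * T ^ α))) * (v s : ∀ _ : J2, ℝ) j) :
    ∀ t ∈ Set.Icc (0 : ℝ) T, v t = 0 :=
  stmt_19_general α T M₁ M₂ K hα0 hα1 hT hM₁ hM₂ hML hK v hvbdd hveq
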